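/- Let P be a partial averaging operator on L¹(0,1) associated to a finite or countable family of pairwise disjoint measurable sets A_k ⊂ (0,1) of positive measure: P(x) = Σ_k (1/m(A_k)) (∫_{A_k} x dm)·χ_{A_k} + x·χ_{A_∞}, where A_∞ is the complement of ∪_k A_k. Then P(x) ≺ x for every x ∈ L¹(0,1). -/

import Mathlib

/-!
The decreasing rearrangement `rr g` is equimeasurable with `g` on `(0,1)`, so `∫ rr g = ∫ g` and
`∫ (rr g - c)⁺ = ∫ (g - c)⁺` for every level `c`. For any `c`, `∫₀ˢ rr g ≤ ∫ (rr g - c)⁺ + c s`,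
with equality for the decreasing function `rr f` at the level `c = rr f s`. Hence `g ≺ f` as soon
as `∫ g = ∫ f` and `∫ (g - c)⁺ ≤ ∫ (f - c)⁺` for all `c`. For `g = P x` both follow from Jensen's
inequality on each `A k`, applied to the convex functions `y ↦ (y - c)⁺` and `y ↦ ±y`, since `P x`
is the average of `x` on `A k` and agrees with `x` off `⋃ k, A k`.
-/

open MeasureTheory Set

/-- The decreasing rearrangement (spectral scale) of `f` on `(0,1)`. -/
noncomputable def rr (f : ℝ → ℝ) (t : ℝ) : ℝ :=
  sInf {s : ℝ | volume {u ∈ Ioo (0:ℝ) 1 | s < f u} ≤ ENNReal.ofReal t}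

/-- Hardy–Littlewood–Pólya majorisation `g ≺ f` on `(0,1)`. -/
def Maj (g f : ℝ → ℝ) : Prop :=
  (∀ s ∈ Ico (0:ℝ) 1, (∫ t in Ioo (0:ℝ) s, rr g t) ≤ ∫ t in Ioo (0:ℝ) s, rr f t) ∧
    (∫ t in Ioo (0:ℝ) 1, rr g t) = ∫ t in Ioo (0:ℝ) 1, rr f t

/-- The orbit `Ω(y)` of all integrable functions on `(0,1)` majorised by `y`. -/
def Omega (y : ℝ → ℝ) : Set (ℝ → ℝ) :=
  {x | IntegrableOn x (Ioo (0:ℝ) 1) ∧ Maj x y}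

/-- `x` is an extreme point of the convex set `Ω` (functions identified a.e. on `(0,1)`). -/
def ExtremePt (Ω : Set (ℝ → ℝ)) (x : ℝ → ℝ) : Prop :=
  x ∈ Ω ∧ ∀ x₁ ∈ Ω, ∀ x₂ ∈ Ω,
    (∀ᵐ u ∂(volume.restrict (Ioo (0:ℝ) 1)), x u = (x₁ u + x₂ u) / 2) →
    (∀ᵐ u ∂(volume.restrict (Ioo (0:ℝ) 1)), x₁ u = x₂ u)

/-- The partial averaging operator associated to a countable disjoint family `A`. -/
noncomputable def partialAvg {ι : Type*} [Countable ι] (A : ι → Set ℝ) (x : ℝ → ℝ) :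
    ℝ → ℝ := fun u =>
  (∑' k, Set.indicator (A k)
      (fun _ => (∫ v in A k, x v) / (volume (A k)).toReal) u) +
    Set.indicator (Ioo (0:ℝ) 1 \ ⋃ k, A k) x u

open Filter
open scoped ENNReal

lemma MeasureTheory.Measure.ext_of_Ioi_finite {α : Type*} [TopologicalSpace α]
    [MeasurableSpace α] [SecondCountableTopology α] [LinearOrder α] [OrderTopology α]
    [BorelSpace α] (μ ν : Measure α) [IsFiniteMeasure μ] (hμν : μ univ = ν univ)
    (h : ∀ a, μ (Ioi a) = ν (Ioi a)) : μ = ν := by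
  have : IsFiniteMeasure ν := ⟨hμν ▸ measure_lt_top μ univ⟩
  refine Measure.ext_of_Ioc_finite μ ν hμν fun a b hab => ?_
  rw [← Ioi_sdiff_Ioi, measure_sdiff (Ioi_subset_Ioi hab.le) nullMeasurableSet_Ioi,
    measure_sdiff (Ioi_subset_Ioi hab.le) nullMeasurableSet_Ioi, h, h]
  all_goals finiteness

noncomputable def distFun (g : ℝ → ℝ) (s : ℝ) : ℝ≥0∞ :=
  volume {u ∈ Ioo (0:ℝ) 1 | s < g u}

section Rearrangement

variable {g : ℝ → ℝ}

lemma distFun_eq_restrict (g : ℝ → ℝ) (s : ℝ) :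
    distFun g s = volume.restrict (Ioo (0:ℝ) 1) {u | s < g u} := by
  rw [Measure.restrict_apply' measurableSet_Ioo, distFun, inter_comm]
  rfl

lemma distFun_antitone (g : ℝ → ℝ) : Antitone (distFun g) := fun _ _ h =>
  measure_mono fun _ hu => ⟨hu.1, h.trans_lt hu.2⟩

lemma distFun_le_one (g : ℝ → ℝ) (s : ℝ) : distFun g s ≤ 1 :=
  (measure_mono (sep_subset _ _)).trans (by simp)

lemma distFun_ne_top (g : ℝ → ℝ) (s : ℝ) : distFun g s ≠ ∞ :=
  ne_top_of_le_ne_top ENNReal.one_ne_top (distFun_le_one g s)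

lemma exists_lt_distFun (g : ℝ → ℝ) {t : ℝ} (ht : t < 1) :
    ∃ s, ENNReal.ofReal t < distFun g s := by
  have hmono : Monotone fun n : ℕ => {u ∈ Ioo (0:ℝ) 1 | -(n:ℝ) < g u} := fun n m hnm u hu =>
    ⟨hu.1, lt_of_le_of_lt (neg_le_neg (Nat.cast_le.2 hnm)) hu.2⟩
  have hunion : (⋃ n : ℕ, {u ∈ Ioo (0:ℝ) 1 | -(n:ℝ) < g u}) = Ioo 0 1 := by
    refine (iUnion_subset fun n => sep_subset _ _).antisymm fun u hu => ?_
    obtain ⟨n, hn⟩ := exists_nat_gt (-g u)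
    exact mem_iUnion.2 ⟨n, hu, by linarith⟩
  have hsup : ⨆ n : ℕ, distFun g (-n) = 1 := by
    simp only [distFun]
    rw [← hmono.measure_iUnion, hunion, Real.volume_Ioo]
    norm_num
  obtain ⟨n, hn⟩ := lt_iSup_iff.1 (hsup ▸ ENNReal.ofReal_lt_one.2 ht)
  exact ⟨-n, hn⟩

lemma exists_distFun_le (hg : AEMeasurable g (volume.restrict (Ioo (0:ℝ) 1))) {t : ℝ}
    (ht : 0 < t) : ∃ s, distFun g s ≤ ENNReal.ofReal t := by
  have hempty : ⋂ n : ℕ, {u | (n:ℝ) < g u} = ∅ :=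
    eq_empty_of_forall_notMem fun u hu =>
      (show (⌈g u⌉₊ : ℝ) < g u from mem_iInter.1 hu _).not_ge (Nat.le_ceil _)
  have hlim := tendsto_measure_iInter_atTop (s := fun n : ℕ => {u | (n:ℝ) < g u})
    (fun _ => hg.nullMeasurable measurableSet_Ioi)
    (fun n m hnm u (hu : (m:ℝ) < g u) => show (n:ℝ) < g u from (Nat.cast_le.2 hnm).trans_lt hu)
    ⟨0, measure_ne_top _ _⟩
  rw [hempty, measure_empty] at hlim
  obtain ⟨n, hn⟩ := (hlim.eventually (ge_mem_nhds (ENNReal.ofReal_pos.2 ht))).exists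
  exact ⟨n, (distFun_eq_restrict g n).trans_le hn⟩

lemma exists_gt_lt_distFun (g : ℝ → ℝ) {t : ℝ≥0∞} {s : ℝ} (h : t < distFun g s) :
    ∃ s' > s, t < distFun g s' := by
  have hmono : Monotone fun n : ℕ => {u ∈ Ioo (0:ℝ) 1 | s + 1 / ((n:ℝ) + 1) < g u} :=
    fun n m hnm u hu => ⟨hu.1, lt_of_le_of_lt (by gcongr) hu.2⟩
  have hunion : (⋃ n : ℕ, {u ∈ Ioo (0:ℝ) 1 | s + 1 / ((n:ℝ) + 1) < g u})
      = {u ∈ Ioo (0:ℝ) 1 | s < g u} := by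
    apply Subset.antisymm
    · exact iUnion_subset fun n u hu =>
        ⟨hu.1, lt_of_le_of_lt (le_add_of_nonneg_right (by positivity)) hu.2⟩
    · intro u hu
      obtain ⟨n, hn⟩ := exists_nat_one_div_lt (sub_pos.2 hu.2)
      exact mem_iUnion.2 ⟨n, hu.1, by linarith⟩
  have hsup : ⨆ n : ℕ, distFun g (s + 1 / ((n:ℝ) + 1)) = distFun g s := by
    rw [distFun, ← hunion, hmono.measure_iUnion]
    rfl
  obtain ⟨n, hn⟩ := lt_iSup_iff.1 (hsup ▸ h)
  exact ⟨_, lt_add_of_pos_right s (by positivity), hn⟩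

lemma bddBelow_distFun_le (g : ℝ → ℝ) {t : ℝ} (ht : t < 1) :
    BddBelow {s | distFun g s ≤ ENNReal.ofReal t} := by
  obtain ⟨s₀, hs₀⟩ := exists_lt_distFun g ht
  exact ⟨s₀, fun s hs => le_of_not_gt fun hlt =>
    (hs.trans_lt hs₀).not_ge (distFun_antitone g hlt.le)⟩

lemma lt_rr_iff (hg : AEMeasurable g (volume.restrict (Ioo (0:ℝ) 1))) {t : ℝ}
    (ht : t ∈ Ioo (0:ℝ) 1) (s : ℝ) :
    s < rr g t ↔ ENNReal.ofReal t < distFun g s := by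
  refine ⟨fun h => lt_of_not_ge fun hle => (csInf_le (bddBelow_distFun_le g ht.2) hle).not_gt h,
    fun h => ?_⟩
  obtain ⟨s', hss', hs'⟩ := exists_gt_lt_distFun g h
  refine hss'.trans_le (le_csInf (exists_distFun_le hg ht.1) fun σ hσ => ?_)
  exact le_of_not_gt fun hlt => (hσ.trans_lt hs').not_ge (distFun_antitone g hlt.le)

lemma rr_antitoneOn (hg : AEMeasurable g (volume.restrict (Ioo (0:ℝ) 1))) :
    AntitoneOn (rr g) (Ioo 0 1) := fun _ ht₁ _ ht₂ h =>
  csInf_le_csInf (bddBelow_distFun_le g ht₂.2) (exists_distFun_le hg ht₁.1)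
    fun _ hσ => hσ.trans (ENNReal.ofReal_le_ofReal h)

lemma distFun_rr (hg : AEMeasurable g (volume.restrict (Ioo (0:ℝ) 1))) (s : ℝ) :
    distFun (rr g) s = distFun g s := by
  set c := (distFun g s).toReal
  have hc : c ≤ 1 := ENNReal.toReal_le_of_le_ofReal zero_le_one (by simpa using distFun_le_one g s)
  have hset : {t ∈ Ioo (0:ℝ) 1 | s < rr g t} = Ioo 0 c := by
    ext t
    simp only [mem_Ioo]
    constructor
    · rintro ⟨ht, hs⟩
      exact ⟨ht.1, (ENNReal.ofReal_lt_iff_lt_toReal ht.1.le (distFun_ne_top g s)).1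
        ((lt_rr_iff hg ht s).1 hs)⟩
    · rintro ⟨h0, hct⟩
      have ht : t ∈ Ioo (0:ℝ) 1 := ⟨h0, hct.trans_le hc⟩
      exact ⟨ht, (lt_rr_iff hg ht s).2
        ((ENNReal.ofReal_lt_iff_lt_toReal h0.le (distFun_ne_top g s)).2 hct)⟩
  rw [distFun, hset, Real.volume_Ioo, sub_zero, ENNReal.ofReal_toReal (distFun_ne_top g s)]

lemma aemeasurable_rr (hg : AEMeasurable g (volume.restrict (Ioo (0:ℝ) 1))) :
    AEMeasurable (rr g) (volume.restrict (Ioo (0:ℝ) 1)) :=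
  aemeasurable_restrict_of_antitoneOn measurableSet_Ioo (rr_antitoneOn hg)

lemma identDistrib_rr (hg : AEMeasurable g (volume.restrict (Ioo (0:ℝ) 1))) :
    ProbabilityTheory.IdentDistrib (rr g) g (volume.restrict (Ioo (0:ℝ) 1))
      (volume.restrict (Ioo (0:ℝ) 1)) where
  aemeasurable_fst := aemeasurable_rr hg
  aemeasurable_snd := hg
  map_eq := by
    have hrr := aemeasurable_rr hg
    refine Measure.ext_of_Ioi_finite _ _ ?_ fun a => ?_
    · rw [Measure.map_apply_of_aemeasurable hrr MeasurableSet.univ,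
        Measure.map_apply_of_aemeasurable hg MeasurableSet.univ, preimage_univ, preimage_univ]
    · rw [Measure.map_apply_of_aemeasurable hrr measurableSet_Ioi,
        Measure.map_apply_of_aemeasurable hg measurableSet_Ioi]
      exact ((distFun_eq_restrict _ a).symm.trans (distFun_rr hg a)).trans
        (distFun_eq_restrict g a)

lemma integrableOn_rr (hg : IntegrableOn g (Ioo (0:ℝ) 1)) : IntegrableOn (rr g) (Ioo 0 1) :=
  (identDistrib_rr hg.aemeasurable).integrable_iff.2 hg

lemma integral_rr (hg : AEMeasurable g (volume.restrict (Ioo (0:ℝ) 1))) :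
    ∫ t in Ioo (0:ℝ) 1, rr g t = ∫ u in Ioo (0:ℝ) 1, g u :=
  (identDistrib_rr hg).integral_eq

lemma integral_max_rr_sub (hg : AEMeasurable g (volume.restrict (Ioo (0:ℝ) 1))) (c : ℝ) :
    ∫ t in Ioo (0:ℝ) 1, max (rr g t - c) 0 = ∫ u in Ioo (0:ℝ) 1, max (g u - c) 0 :=
  ((identDistrib_rr hg).comp (u := fun y => max (y - c) 0) (by fun_prop)).integral_eq

end Rearrangement

lemma setIntegral_le_setIntegral_max_sub_add {α : Type*} [MeasurableSpace α] {μ : Measure α}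
    {h : α → ℝ} {E F : Set α} (hEF : E ⊆ F) (hF : μ F ≠ ∞) (hh : IntegrableOn h F μ) (c : ℝ) :
    ∫ u in E, h u ∂μ ≤ ∫ u in F, max (h u - c) 0 ∂μ + c * μ.real E := by
  have hhF : IntegrableOn (fun u => h u - c) F μ := hh.sub (integrableOn_const hF)
  have hhE : IntegrableOn (fun u => h u - c) E μ := hhF.mono_set hEF
  calc ∫ u in E, h u ∂μ = ∫ u in E, (h u - c) ∂μ + c * μ.real E := by
        rw [integral_sub (hh.mono_set hEF)
            (integrableOn_const (ne_top_of_le_ne_top hF (measure_mono hEF))),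
          setIntegral_const, smul_eq_mul]
        ring
    _ ≤ ∫ u in E, max (h u - c) 0 ∂μ + c * μ.real E :=
        add_le_add (setIntegral_mono hhE hhE.pos_part fun u => le_max_left _ _) le_rfl
    _ ≤ ∫ u in F, max (h u - c) 0 ∂μ + c * μ.real E :=
        add_le_add (setIntegral_mono_set hhF.pos_part
          (Eventually.of_forall fun u => le_max_right _ _) hEF.eventuallyLE) le_rfl

lemma integral_max_sub_eq_of_antitoneOn {h : ℝ → ℝ} {a b s : ℝ} (hmono : AntitoneOn h (Ioo a b))
    (hh : IntegrableOn h (Ioo a b)) (hs : s ∈ Ioo a b) :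
    ∫ t in Ioo a b, max (h t - h s) 0 = (∫ t in Ioo a s, h t) - h s * (s - a) := by
  have hsub : Ioo a s ⊆ Ioo a b := Ioo_subset_Ioo_right hs.2.le
  rw [setIntegral_eq_of_subset_of_forall_sdiff_eq_zero measurableSet_Ioo hsub fun t ht =>
      max_eq_right (sub_nonpos.2 (hmono hs ht.1 (not_lt.1 fun hts => ht.2 ⟨ht.1.1, hts⟩))),
    setIntegral_congr_fun measurableSet_Ioo fun t ht =>
      max_eq_left (sub_nonneg.2 (hmono (hsub ht) hs ht.2.le)),
    integral_sub (hh.mono_set hsub) (integrableOn_const measure_Ioo_lt_top.ne), setIntegral_const,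
    Real.volume_real_Ioo_of_le hs.1.le, smul_eq_mul, mul_comm]

lemma maj_of_integral_max_sub_le {g f : ℝ → ℝ} (hg : IntegrableOn g (Ioo (0:ℝ) 1))
    (hf : IntegrableOn f (Ioo (0:ℝ) 1))
    (hle : ∀ c, ∫ u in Ioo (0:ℝ) 1, max (g u - c) 0 ≤ ∫ u in Ioo (0:ℝ) 1, max (f u - c) 0)
    (heq : ∫ u in Ioo (0:ℝ) 1, g u = ∫ u in Ioo (0:ℝ) 1, f u) : Maj g f := by
  refine ⟨fun s hs => ?_, by rw [integral_rr hg.aemeasurable, integral_rr hf.aemeasurable, heq]⟩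
  rcases hs.1.eq_or_lt with rfl | hs0
  · simp
  set c := rr f s
  calc ∫ t in Ioo 0 s, rr g t ≤ (∫ t in Ioo 0 1, max (rr g t - c) 0) + c * s := by
        simpa [Real.volume_real_Ioo_of_le hs.1] using
          setIntegral_le_setIntegral_max_sub_add (Ioo_subset_Ioo_right hs.2.le)
            measure_Ioo_lt_top.ne (integrableOn_rr hg) c
    _ ≤ (∫ t in Ioo 0 1, max (rr f t - c) 0) + c * s := by
        rw [integral_max_rr_sub hg.aemeasurable, integral_max_rr_sub hf.aemeasurable]
        exact add_le_add (hle c) le_rfl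
    _ = ∫ t in Ioo 0 s, rr f t := by
        rw [integral_max_sub_eq_of_antitoneOn (rr_antitoneOn hf.aemeasurable) (integrableOn_rr hf)
          ⟨hs0, hs.2⟩, sub_zero]
        ring

lemma ConvexOn.measureReal_mul_map_setAverage_le {α : Type*} [MeasurableSpace α]
    {μ : Measure α} {s : Set α} {f : α → ℝ} {φ : ℝ → ℝ} (hφ : ConvexOn ℝ univ φ)
    (hφc : Continuous φ) (h0 : μ s ≠ 0) (hs : μ s ≠ ∞) (hf : IntegrableOn f s μ)
    (hφf : IntegrableOn (fun x => φ (f x)) s μ) :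
    μ.real s * φ (⨍ x in s, f x ∂μ) ≤ ∫ x in s, φ (f x) ∂μ := by
  rw [← measure_smul_setAverage _ hs, smul_eq_mul]
  exact mul_le_mul_of_nonneg_left (hφ.map_set_average_le hφc.continuousOn isClosed_univ h0 hs
    (.of_forall fun _ => mem_univ _) hf hφf) measureReal_nonneg

section PartialAverage

variable {ι : Type*} [Countable ι] {A : ι → Set ℝ}

lemma partialAvg_eq_setAverage (hdisj : Pairwise (Function.onFun Disjoint A)) (x : ℝ → ℝ)
    {k : ι} {u : ℝ} (hu : u ∈ A k) : partialAvg A x u = ⨍ v in A k, x v := by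
  rw [partialAvg, tsum_eq_single k fun j hj => indicator_of_notMem
      (disjoint_right.1 (hdisj hj) hu) _, indicator_of_mem hu,
    indicator_of_notMem fun h => h.2 (mem_iUnion.2 ⟨k, hu⟩), add_zero, setAverage_eq,
    measureReal_def, smul_eq_mul, div_eq_inv_mul]

lemma partialAvg_eq_of_mem_sdiff (x : ℝ → ℝ) {u : ℝ} (hu : u ∈ Ioo (0:ℝ) 1 \ ⋃ k, A k) :
    partialAvg A x u = x u := by
  have hA : ∀ k, u ∉ A k := fun k hk => hu.2 (mem_iUnion.2 ⟨k, hk⟩)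
  simp [partialAvg, indicator_of_notMem (hA _), indicator_of_mem hu]

lemma setIntegral_comp_partialAvg (hmeas : ∀ k, MeasurableSet (A k))
    (hdisj : Pairwise (Function.onFun Disjoint A)) (x φ : ℝ → ℝ) (k : ι) :
    ∫ u in A k, φ (partialAvg A x u) = volume.real (A k) * φ (⨍ v in A k, x v) := by
  rw [setIntegral_congr_fun (hmeas k) fun u hu => by rw [partialAvg_eq_setAverage hdisj x hu],
    setIntegral_const, smul_eq_mul]

lemma setIntegral_comp_partialAvg_le (hmeas : ∀ k, MeasurableSet (A k))
    (hsub : ∀ k, A k ⊆ Ioo (0:ℝ) 1) (hdisj : Pairwise (Function.onFun Disjoint A))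
    (hpos : ∀ k, 0 < volume (A k)) {φ : ℝ → ℝ} (hφ : ConvexOn ℝ univ φ) (hφc : Continuous φ)
    {x : ℝ → ℝ} (hx : IntegrableOn x (Ioo (0:ℝ) 1))
    (hφx : IntegrableOn (fun u => φ (x u)) (Ioo (0:ℝ) 1)) (k : ι) :
    ∫ u in A k, φ (partialAvg A x u) ≤ ∫ u in A k, φ (x u) := by
  rw [setIntegral_comp_partialAvg hmeas hdisj x φ k]
  exact hφ.measureReal_mul_map_setAverage_le hφc (hpos k).ne'
    (ne_top_of_le_ne_top measure_Ioo_lt_top.ne (measure_mono (hsub k)))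
    (hx.mono_set (hsub k)) (hφx.mono_set (hsub k))

lemma integrableOn_partialAvg (hmeas : ∀ k, MeasurableSet (A k))
    (hsub : ∀ k, A k ⊆ Ioo (0:ℝ) 1) (hdisj : Pairwise (Function.onFun Disjoint A))
    (hpos : ∀ k, 0 < volume (A k)) {x : ℝ → ℝ} (hx : IntegrableOn x (Ioo (0:ℝ) 1)) :
    IntegrableOn (partialAvg A x) (Ioo (0:ℝ) 1) := by
  have hA : IntegrableOn (partialAvg A x) (⋃ k, A k) := by
    refine integrableOn_iUnion_of_summable_integral_norm (fun k => ?_) ?_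
    · exact (integrableOn_const (ne_top_of_le_ne_top measure_Ioo_lt_top.ne
        (measure_mono (hsub k)))).congr_fun
          (fun u hu => (partialAvg_eq_setAverage hdisj x hu).symm) (hmeas k)
    · have hnorm := hasSum_integral_iUnion hmeas hdisj
        (IntegrableOn.mono_set hx.norm (iUnion_subset hsub))
      exact hnorm.summable.of_nonneg_of_le (fun k => integral_nonneg fun _ => norm_nonneg _)
        (setIntegral_comp_partialAvg_le hmeas hsub hdisj hpos (convexOn_norm convex_univ)
          continuous_norm hx hx.norm)
  have hB : IntegrableOn (partialAvg A x) (Ioo (0:ℝ) 1 \ ⋃ k, A k) :=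
    (hx.mono_set sdiff_subset).congr_fun (fun u hu => (partialAvg_eq_of_mem_sdiff x hu).symm)
      (measurableSet_Ioo.diff (.iUnion hmeas))
  simpa [union_sdiff_cancel (iUnion_subset hsub)] using hA.union hB

lemma integral_comp_partialAvg_le (hmeas : ∀ k, MeasurableSet (A k))
    (hsub : ∀ k, A k ⊆ Ioo (0:ℝ) 1) (hdisj : Pairwise (Function.onFun Disjoint A))
    (hpos : ∀ k, 0 < volume (A k)) {φ : ℝ → ℝ} (hφ : ConvexOn ℝ univ φ) (hφc : Continuous φ)
    {x : ℝ → ℝ} (hx : IntegrableOn x (Ioo (0:ℝ) 1))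
    (hφx : IntegrableOn (fun u => φ (x u)) (Ioo (0:ℝ) 1))
    (hφP : IntegrableOn (fun u => φ (partialAvg A x u)) (Ioo (0:ℝ) 1)) :
    ∫ u in Ioo (0:ℝ) 1, φ (partialAvg A x u) ≤ ∫ u in Ioo (0:ℝ) 1, φ (x u) := by
  have hT : MeasurableSet (⋃ k, A k) := .iUnion hmeas
  have hTsub : (⋃ k, A k) ⊆ Ioo (0:ℝ) 1 := iUnion_subset hsub
  rw [← integral_inter_add_sdiff hT hφP, ← integral_inter_add_sdiff hT hφx,
    inter_eq_right.2 hTsub]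
  have hunion := hasSum_le
    (setIntegral_comp_partialAvg_le hmeas hsub hdisj hpos hφ hφc hx hφx)
    (hasSum_integral_iUnion hmeas hdisj (hφP.mono_set hTsub))
    (hasSum_integral_iUnion hmeas hdisj (hφx.mono_set hTsub))
  have hrest : ∫ u in Ioo (0:ℝ) 1 \ ⋃ k, A k, φ (partialAvg A x u)
      = ∫ u in Ioo (0:ℝ) 1 \ ⋃ k, A k, φ (x u) :=
    setIntegral_congr_fun (measurableSet_Ioo.diff hT) fun u hu => by
      rw [partialAvg_eq_of_mem_sdiff x hu]
  exact add_le_add hunion hrest.le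

end PartialAverage

theorem partialAvg_majorised {ι : Type*} [Countable ι] (A : ι → Set ℝ)
    (hmeas : ∀ k, MeasurableSet (A k)) (hsub : ∀ k, A k ⊆ Ioo (0:ℝ) 1)
    (hdisj : Pairwise (Function.onFun Disjoint A))
    (hpos : ∀ k, 0 < volume (A k))
    (x : ℝ → ℝ) (hx : IntegrableOn x (Ioo (0:ℝ) 1)) :
    Maj (partialAvg A x) x := by
  have hP := integrableOn_partialAvg hmeas hsub hdisj hpos hx
  have hjensen := fun φ (hφ : ConvexOn ℝ univ φ) (hφc : Continuous φ) =>
    integral_comp_partialAvg_le hmeas hsub hdisj hpos hφ hφc hx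
  refine maj_of_integral_max_sub_le hP hx (fun c => ?_) ?_
  · have hconst : IntegrableOn (fun _ => c) (Ioo (0:ℝ) 1) :=
      integrableOn_const measure_Ioo_lt_top.ne
    exact hjensen (fun y => max (y - c) 0)
      (((convexOn_id convex_univ).sub (concaveOn_const c convex_univ)).sup
        (convexOn_const 0 convex_univ)) (by fun_prop) (hx.sub hconst).pos_part
      (hP.sub hconst).pos_part
  · refine le_antisymm (hjensen id (convexOn_id convex_univ) continuous_id hx hP) ?_
    simpa [integral_neg] using
      hjensen (fun y => -y) (concaveOn_id convex_univ).neg continuous_neg hx.neg hP.neg
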